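/- arXiv:2003.00841 — 2 statements merged into one kernel-verified Lean document; each statement's English description precedes it below -/
import Mathlib

section
/- Let c be a nonzero real number, p ∈ ℂ^n, and let φ₁,…,φ_N be holomorphic functions on a neighborhood of p with φ_i(p) = 0 for all i, and 0 ≤ s ≤ N. Suppose f(z) := 1 + (c/|c|)·(Σ_{i=1}^s |φ_i(z)|² − Σ_{i=s+1}^N |φ_i(z)|²) is positive on a neighborhood of p, and set D = (2/c) log f. Then f^{n+1} · det[∂²D/∂z_a ∂z̄_b]_{a,b=1,…,n} belongs to the Umehara algebra Λ_p: there exist a holomorphic function h' near p and a tuple α' of holomorphic functions vanishing at p with f^{n+1} · det[∂²D/∂z_a ∂z̄_b] = h' + conj(h') + ⟨α',α'⟩_{ℓ'} near p. -/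
open Filter Topology Complex

/-- Wirtinger derivative `∂F/∂z_j = ½(∂F/∂x_j − i ∂F/∂y_j)`. -/
noncomputable def wderiv {n : ℕ} (j : Fin n) (F : (Fin n → ℂ) → ℂ) (z : Fin n → ℂ) : ℂ :=
  (1 / 2 : ℂ) * (fderiv ℝ F z (Pi.single j 1) - Complex.I * fderiv ℝ F z (Pi.single j Complex.I))

/-- Conjugate Wirtinger derivative `∂F/∂z̄_j = ½(∂F/∂x_j + i ∂F/∂y_j)`. -/
noncomputable def wderivBar {n : ℕ} (j : Fin n) (F : (Fin n → ℂ) → ℂ) (z : Fin n → ℂ) : ℂ :=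
  (1 / 2 : ℂ) * (fderiv ℝ F z (Pi.single j 1) + Complex.I * fderiv ℝ F z (Pi.single j Complex.I))

/-- `⟨α,α⟩_ℓ(z)` as a complex number. -/
noncomputable def hermC {n m : ℕ} (ℓ : ℕ) (α : Fin m → (Fin n → ℂ) → ℂ)
    (z : Fin n → ℂ) : ℂ :=
  ∑ j : Fin m, (if (j : ℕ) < ℓ then (1 : ℂ) else -1) *
    (α j z * (starRingEnd ℂ) (α j z))

/-!
Write `f = Σ_o ε_o |ψ_o|²` for the holomorphic family `ψ = (1, φ₁, …, φ_N)` with weights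
`(1, ±c/|c|)`. Then `∂_a ∂̄_b log f = (f ⟨∂_aψ, ∂_bψ⟩ - ⟨∂_aψ, ψ⟩ ⟨ψ, ∂_bψ⟩) / f²`, and the
bordered-determinant identity turns `f^{n+1}` times the determinant of this matrix into `(2/c)^n`
times the determinant of the weighted Gram matrix of the holomorphic vectors
`(ψ_o, ∂_1ψ_o, …, ∂_nψ_o)`. Expanding that determinant multilinearly in its rows gives
`Σ_σ w_σ P_σ conj(Q_σ)` with `P_σ, Q_σ` holomorphic; being the determinant of a Hermitian matrix it
is real, hence equal to `Σ_σ (w_σ/2) (P_σ conj(Q_σ) + conj(P_σ) Q_σ)`, and each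
`P conj(Q) + conj(P) Q` lies in `Λ_p` by polarization.
-/

open ComplexConjugate

section Wirtinger

noncomputable def partialZ {n : ℕ} (j : Fin n) (F : (Fin n → ℂ) → ℂ) (z : Fin n → ℂ) : ℂ :=
  fderiv ℂ F z (Pi.single j 1)

variable {n : ℕ} {F G : (Fin n → ℂ) → ℂ} {z : Fin n → ℂ}

theorem AnalyticAt.partialZ (h : AnalyticAt ℂ F z) (j : Fin n) :
    AnalyticAt ℂ (partialZ j F) z := by
  have := ((ContinuousLinearMap.apply ℂ ℂ (Pi.single j 1)).analyticAt (fderiv ℂ F z)).comp h.fderiv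
  exact this

theorem wderiv_congr_of_eventuallyEq (h : F =ᶠ[𝓝 z] G) (j : Fin n) :
    wderiv j F z = wderiv j G z := by
  rw [wderiv, wderiv, h.fderiv_eq]

theorem fderiv_real_single_I (h : DifferentiableAt ℂ F z) (j : Fin n) :
    fderiv ℝ F z (Pi.single j I) = I * fderiv ℂ F z (Pi.single j 1) := by
  rw [h.fderiv_restrictScalars ℝ, ← smul_eq_mul, ← map_smul, ← Pi.single_smul, smul_eq_mul,
    mul_one]
  rfl

theorem wderiv_eq_partialZ (h : DifferentiableAt ℂ F z) (j : Fin n) :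
    wderiv j F z = partialZ j F z := by
  rw [wderiv, partialZ, fderiv_real_single_I h, h.fderiv_restrictScalars ℝ]
  simp only [ContinuousLinearMap.coe_restrictScalars']
  linear_combination (-(1 / 2) * fderiv ℂ F z (Pi.single j 1)) * I_mul_I

theorem wderivBar_eq_zero (h : DifferentiableAt ℂ F z) (j : Fin n) :
    wderivBar j F z = 0 := by
  rw [wderivBar, fderiv_real_single_I h, h.fderiv_restrictScalars ℝ]
  simp only [ContinuousLinearMap.coe_restrictScalars']
  linear_combination (1 / 2 * fderiv ℂ F z (Pi.single j 1)) * I_mul_I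

theorem wderiv_conj (F : (Fin n → ℂ) → ℂ) (j : Fin n) :
    wderiv j (fun w => conj (F w)) z = conj (wderivBar j F z) := by
  have : fderiv ℝ (fun w => conj (F w)) z = _ := fderiv_star (f := F)
  simp only [wderiv, wderivBar, this, ContinuousLinearMap.comp_apply,
    ContinuousLinearEquiv.coe_coe, starL'_apply, RCLike.star_def, map_mul, map_add, map_div₀,
    map_one, map_ofNat, conj_I]
  ring

theorem wderivBar_conj (F : (Fin n → ℂ) → ℂ) (j : Fin n) :
    wderivBar j (fun w => conj (F w)) z = conj (wderiv j F z) := by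
  simpa using congrArg conj (wderiv_conj (fun w => conj (F w)) j (z := z)).symm

theorem wderiv_sum {ι : Type*} (s : Finset ι) {F : ι → (Fin n → ℂ) → ℂ}
    (h : ∀ i ∈ s, DifferentiableAt ℝ (F i) z) (j : Fin n) :
    wderiv j (fun w => ∑ i ∈ s, F i w) z = ∑ i ∈ s, wderiv j (F i) z := by
  simp only [wderiv, fderiv_fun_sum h, FunLike.coe_sum, Finset.sum_apply,
    ← Finset.mul_sum, Finset.sum_sub_distrib]

theorem wderiv_const_mul (c : ℂ) (hF : DifferentiableAt ℝ F z) (j : Fin n) :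
    wderiv j (fun w => c * F w) z = c * wderiv j F z := by
  simp only [wderiv, fderiv_const_mul hF c, smul_apply, smul_eq_mul]
  ring

theorem wderiv_mul (hF : DifferentiableAt ℝ F z) (hG : DifferentiableAt ℝ G z) (j : Fin n) :
    wderiv j (fun w => F w * G w) z = wderiv j F z * G z + F z * wderiv j G z := by
  simp only [wderiv, fderiv_fun_mul hF hG, add_apply, smul_apply, smul_eq_mul]
  ring

theorem wderiv_inv (hF : DifferentiableAt ℝ F z) (h0 : F z ≠ 0) (j : Fin n) :
    wderiv j (fun w => (F w)⁻¹) z = -(F z ^ 2)⁻¹ * wderiv j F z := by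
  have hc : HasFDerivAt (fun w => (F w)⁻¹)
      ((((1 : ℂ →L[ℂ] ℂ).smulRight (-(F z ^ 2)⁻¹)).restrictScalars ℝ).comp (fderiv ℝ F z)) z :=
    ((hasDerivAt_inv h0).hasFDerivAt.restrictScalars ℝ).comp z hF.hasFDerivAt
  simp only [wderiv, hc.fderiv, ContinuousLinearMap.comp_apply,
    ContinuousLinearMap.coe_restrictScalars', ContinuousLinearMap.smulRight_apply, one_apply_eq_self,
    smul_eq_mul]
  ring

theorem wderivBar_ofReal_comp {f : (Fin n → ℂ) → ℝ} {g : ℝ → ℝ} {g' : ℝ}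
    (hg : HasDerivAt g g' (f z)) (hf : DifferentiableAt ℝ f z) (j : Fin n) :
    wderivBar j (fun w => (g (f w) : ℂ)) z = g' * wderivBar j (fun w => (f w : ℂ)) z := by
  have h1 : HasFDerivAt (fun w => (g (f w) : ℂ)) _ z :=
    ofRealCLM.hasFDerivAt.comp z (hg.comp_hasFDerivAt z hf.hasFDerivAt)
  have h2 : HasFDerivAt (fun w => (f w : ℂ)) _ z := ofRealCLM.hasFDerivAt.comp z hf.hasFDerivAt
  simp only [wderivBar, h1.fderiv, h2.fderiv, ContinuousLinearMap.comp_apply,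
    ContinuousLinearMap.comp_smulₛₗ, smul_apply, ofRealCLM_apply, Real.ringHom_apply, real_smul]
  ring

end Wirtinger

section WeightedInner

variable {n : ℕ} {ι : Type*} [Fintype ι]

noncomputable def weightedInner (ε : ι → ℝ) (G H : ι → (Fin n → ℂ) → ℂ) (z : Fin n → ℂ) : ℂ :=
  ∑ i, (ε i : ℂ) * (G i z * conj (H i z))

noncomputable def weightedGram {J : Type*} (ε : ι → ℝ) (w : ι → J → (Fin n → ℂ) → ℂ)
    (z : Fin n → ℂ) : Matrix J J ℂ :=
  Matrix.of fun a b => weightedInner ε (fun i => w i a) (fun i => w i b) z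

variable {ε : ι → ℝ} {G H : ι → (Fin n → ℂ) → ℂ} {z : Fin n → ℂ}

theorem conj_weightedInner : conj (weightedInner ε G H z) = weightedInner ε H G z := by
  simp only [weightedInner, map_sum, map_mul, conj_ofReal, conj_conj, mul_comm (G _ z)]

theorem differentiableAt_weightedInner (hG : ∀ i, DifferentiableAt ℂ (G i) z)
    (hH : ∀ i, DifferentiableAt ℂ (H i) z) : DifferentiableAt ℝ (weightedInner ε G H) z :=
  .fun_sum fun i _ =>
    (((hG i).restrictScalars ℝ).fun_mul ((hH i).restrictScalars ℝ).star).const_mul _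

theorem wderiv_weightedInner (hG : ∀ i, DifferentiableAt ℂ (G i) z)
    (hH : ∀ i, DifferentiableAt ℂ (H i) z) (j : Fin n) :
    wderiv j (weightedInner ε G H) z = weightedInner ε (fun i => partialZ j (G i)) H z := by
  have hG' i := (hG i).restrictScalars ℝ
  have hH' i : DifferentiableAt ℝ (fun w => conj (H i w)) z := ((hH i).restrictScalars ℝ).star
  unfold weightedInner
  rw [wderiv_sum _ (fun i _ => ((hG' i).fun_mul (hH' i)).const_mul _)]
  refine Finset.sum_congr rfl fun i _ => ?_
  rw [wderiv_const_mul _ ((hG' i).fun_mul (hH' i)), wderiv_mul (hG' i) (hH' i), wderiv_conj,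
    wderivBar_eq_zero (hH i), wderiv_eq_partialZ (hG i), map_zero, mul_zero, add_zero]

theorem wderivBar_weightedInner (hG : ∀ i, DifferentiableAt ℂ (G i) z)
    (hH : ∀ i, DifferentiableAt ℂ (H i) z) (j : Fin n) :
    wderivBar j (weightedInner ε G H) z = weightedInner ε G (fun i => partialZ j (H i)) z := by
  have : weightedInner ε G H = fun w => conj (weightedInner ε H G w) :=
    funext fun _ => conj_weightedInner.symm
  rw [this, wderivBar_conj, wderiv_weightedInner hH hG, conj_weightedInner]

end WeightedInner

section Determinants

theorem Matrix.pow_card_mul_det_eq_mul_det_bordered {R m : Type*} [CommRing R] [Fintype m]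
    [DecidableEq m] (B : Matrix (Unit ⊕ m) (Unit ⊕ m) R) :
    B (.inl ()) (.inl ()) ^ Fintype.card m * B.det =
      B (.inl ()) (.inl ()) * (Matrix.of fun a b => B (.inl ()) (.inl ()) * B (.inr a) (.inr b) -
        B (.inr a) (.inl ()) * B (.inl ()) (.inr b)).det := by
  set g := B (.inl ()) (.inl ())
  -- row reduction: scale the last rows by `g` and subtract multiples of the first row
  set L : Matrix (Unit ⊕ m) (Unit ⊕ m) R :=
    Matrix.fromBlocks 1 0 (Matrix.of fun a _ => -B (.inr a) (.inl ())) (g • 1)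
  have hL : L.det = g ^ Fintype.card m := by
    simp [L, Matrix.det_fromBlocks_zero₁₂]
  have hLB : L * B = Matrix.fromBlocks B.toBlocks₁₁ B.toBlocks₁₂ 0 (Matrix.of fun a b =>
      g * B (.inr a) (.inr b) - B (.inr a) (.inl ()) * B (.inl ()) (.inr b)) := by
    ext (⟨⟩ | a) (⟨⟩ | b) <;>
      simp [L, g, Matrix.mul_apply, Fintype.sum_sum_type, Matrix.one_apply, Matrix.fromBlocks,
        Matrix.toBlocks₁₁, Matrix.toBlocks₁₂] <;> ring
  have := congrArg Matrix.det hLB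
  rwa [Matrix.det_mul, hL, Matrix.det_fromBlocks_zero₂₁, Matrix.det_unique B.toBlocks₁₁] at this

theorem Matrix.det_of_sum_mul {R J ι : Type*} [CommRing R] [Fintype J] [DecidableEq J]
    [Fintype ι] (c r : ι → J → R) :
    (Matrix.of fun a b => ∑ i, c i a * r i b).det =
      ∑ σ : J → ι, (∏ a, c (σ a) a) * (Matrix.of fun a b => r (σ a) b).det := by
  have hrows : (Matrix.of fun a b => ∑ i, c i a * r i b) = fun a => ∑ i, c i a • r i := by
    ext a b
    simp [Finset.sum_apply]
  change Matrix.detRowAlternating _ = _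
  rw [hrows]
  refine (Matrix.detRowAlternating.toMultilinearMap.map_sum fun a i => c i a • r i).trans
    (Finset.sum_congr rfl fun σ _ => ?_)
  exact Matrix.detRowAlternating.toMultilinearMap.map_smul_univ _ _

end Determinants

section LogHessian

variable {n : ℕ} {ι : Type*} [Fintype ι] {ε : ι → ℝ} {φ : ι → (Fin n → ℂ) → ℂ}
  {f : (Fin n → ℂ) → ℝ} {D : (Fin n → ℂ) → ℂ} {κ : ℝ} {z : Fin n → ℂ}

theorem wderivBar_log_weightedInner (hf : ∀ w, (f w : ℂ) = weightedInner ε φ φ w)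
    (hD : ∀ w, D w = ((κ * Real.log (f w) : ℝ) : ℂ))
    (hφ : ∀ i, DifferentiableAt ℂ (φ i) z) (hfz : 0 < f z) (b : Fin n) :
    wderivBar b D z =
      κ * (weightedInner ε φ φ z)⁻¹ * weightedInner ε φ (fun i => partialZ b (φ i)) z := by
  have hf_re : f = fun w => (weightedInner ε φ φ w).re := funext fun w => by rw [← hf, ofReal_re]
  have hf_diff : DifferentiableAt ℝ f z := by
    rw [hf_re]
    exact reCLM.differentiableAt.comp z (differentiableAt_weightedInner hφ hφ)
  have hlog : HasDerivAt (fun t => κ * Real.log t) (κ * (f z)⁻¹) (f z) :=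
    (Real.hasDerivAt_log hfz.ne').const_mul κ
  rw [show D = fun w => ((fun t => κ * Real.log t) (f w) : ℂ) from funext hD,
    wderivBar_ofReal_comp hlog hf_diff, show (fun w => (f w : ℂ)) = _ from funext hf,
    wderivBar_weightedInner hφ hφ, ← hf z]
  push_cast
  ring

theorem wderiv_wderivBar_log_weightedInner (hf : ∀ w, (f w : ℂ) = weightedInner ε φ φ w)
    (hD : ∀ w, D w = ((κ * Real.log (f w) : ℝ) : ℂ))
    (hz : ∀ᶠ w in 𝓝 z, (∀ i, AnalyticAt ℂ (φ i) w) ∧ 0 < f w) (a b : Fin n) :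
    wderiv a (wderivBar b D) z =
      κ * ((f z : ℂ) ^ 2)⁻¹ *
        (f z * weightedInner ε (fun i => partialZ a (φ i)) (fun i => partialZ b (φ i)) z -
          weightedInner ε (fun i => partialZ a (φ i)) φ z *
            weightedInner ε φ (fun i => partialZ b (φ i)) z) := by
  obtain ⟨hφz, hfz⟩ := hz.self_of_nhds
  have hφd i := (hφz i).differentiableAt
  have hψd i := ((hφz i).partialZ b).differentiableAt
  set F := weightedInner ε φ φ
  set V := weightedInner ε φ fun i => partialZ b (φ i)
  have hF0 : F z ≠ 0 := by rw [← hf]; exact_mod_cast hfz.ne'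
  have hFd : DifferentiableAt ℝ F z := differentiableAt_weightedInner hφd hφd
  have hVd : DifferentiableAt ℝ V z := differentiableAt_weightedInner hφd hψd
  have hFinv : DifferentiableAt ℝ (fun w => (F w)⁻¹) z := hFd.inv hF0
  have hloc : wderivBar b D =ᶠ[𝓝 z] fun w => κ * ((F w)⁻¹ * V w) :=
    hz.mono fun w hw => by
      rw [wderivBar_log_weightedInner hf hD (fun i => (hw.1 i).differentiableAt) hw.2, mul_assoc]
  rw [wderiv_congr_of_eventuallyEq hloc, wderiv_const_mul _ (hFinv.fun_mul hVd),
    wderiv_mul hFinv hVd, wderiv_inv hFd hF0, wderiv_weightedInner hφd hφd,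
    wderiv_weightedInner hφd hψd, hf z]
  field_simp
  ring

theorem pow_succ_mul_det_wderiv_wderivBar_log (hf : ∀ w, (f w : ℂ) = weightedInner ε φ φ w)
    (hD : ∀ w, D w = ((κ * Real.log (f w) : ℝ) : ℂ))
    (hz : ∀ᶠ w in 𝓝 z, (∀ i, AnalyticAt ℂ (φ i) w) ∧ 0 < f w) :
    (f z : ℂ) ^ (n + 1) * (Matrix.of fun a b : Fin n => wderiv a (wderivBar b D) z).det =
      (κ : ℂ) ^ n * (weightedGram ε
        (fun i => Sum.elim (fun _ : Unit => φ i) fun b => partialZ b (φ i)) z).det := by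
  set B := weightedGram ε (fun i => Sum.elim (fun _ : Unit => φ i) fun b => partialZ b (φ i)) z
  have hB : B (.inl ()) (.inl ()) = f z := (hf z).symm
  have hf0 : (f z : ℂ) ≠ 0 := by exact_mod_cast hz.self_of_nhds.2.ne'
  have hbordered := B.pow_card_mul_det_eq_mul_det_bordered
  rw [hB, Fintype.card_fin] at hbordered
  have hhess : (Matrix.of fun a b : Fin n => wderiv a (wderivBar b D) z) =
      (κ * ((f z : ℂ) ^ 2)⁻¹) • Matrix.of fun a b =>
        f z * B (.inr a) (.inr b) - B (.inr a) (.inl ()) * B (.inl ()) (.inr b) := by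
    ext a b
    simp only [Matrix.of_apply, Matrix.smul_apply, smul_eq_mul,
      wderiv_wderivBar_log_weightedInner hf hD hz a b]
    rfl
  rw [hhess, Matrix.det_smul, Fintype.card_fin]
  refine mul_left_cancel₀ (pow_ne_zero n hf0) ?_
  have hcancel : ((f z : ℂ) ^ 2) ^ n * (((f z : ℂ) ^ 2)⁻¹) ^ n = 1 := by
    rw [← mul_pow, mul_inv_cancel₀ (pow_ne_zero 2 hf0), one_pow]
  rw [mul_left_comm _ ((κ : ℂ) ^ n), hbordered]
  set M := Matrix.det (Matrix.of fun a b : Fin n =>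
    (f z : ℂ) * B (.inr a) (.inr b) - B (.inr a) (.inl ()) * B (.inl ()) (.inr b))
  linear_combination ((f z : ℂ) * κ ^ n * M) * hcancel

end LogHessian

section Umehara

variable {n : ℕ} {p : Fin n → ℂ} {F G : (Fin n → ℂ) → ℂ}

/-- Membership in the Umehara algebra `Λ_p`, with the signs `±1` of `⟨α,α⟩_ℓ` relaxed to real
weights `r k`; rescaling `β k` by `√|r k|` recovers the signed form (`MemUmehara.exists_hermC`). -/
def MemUmehara (p : Fin n → ℂ) (F : (Fin n → ℂ) → ℂ) : Prop :=
  ∃ (h : (Fin n → ℂ) → ℂ) (m : ℕ) (r : Fin m → ℝ) (β : Fin m → (Fin n → ℂ) → ℂ),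
    AnalyticAt ℂ h p ∧ (∀ k, AnalyticAt ℂ (β k) p) ∧ (∀ k, β k p = 0) ∧
      ∀ᶠ z in 𝓝 p, F z = h z + conj (h z) + weightedInner r β β z

theorem MemUmehara.congr (hF : MemUmehara p F) (hFG : F =ᶠ[𝓝 p] G) : MemUmehara p G := by
  obtain ⟨h, m, r, β, hh, hβ, hβ0, hF⟩ := hF
  exact ⟨h, m, r, β, hh, hβ, hβ0, hFG.symm.trans hF⟩

theorem memUmehara_zero : MemUmehara p fun _ => 0 :=
  ⟨0, 0, Fin.elim0, Fin.elim0, analyticAt_const, fun k => k.elim0, fun k => k.elim0,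
    .of_forall fun z => by simp [weightedInner]⟩

theorem MemUmehara.add (hF : MemUmehara p F) (hG : MemUmehara p G) :
    MemUmehara p (F + G) := by
  obtain ⟨h, m, r, β, hh, hβ, hβ0, hF⟩ := hF
  obtain ⟨h', m', r', β', hh', hβ', hβ0', hG⟩ := hG
  refine ⟨h + h', m + m', Fin.append r r', Fin.append β β', hh.add hh',
    Fin.addCases (by simpa using hβ) (by simpa using hβ'),
    Fin.addCases (by simpa using hβ0) (by simpa using hβ0'), ?_⟩
  filter_upwards [hF, hG] with z hFz hGz
  simp only [Pi.add_apply, hFz, hGz, weightedInner, Fin.sum_univ_add, Fin.append_left,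
    Fin.append_right, map_add]
  ring

theorem MemUmehara.const_mul (hF : MemUmehara p F) (c : ℝ) :
    MemUmehara p fun z => c * F z := by
  obtain ⟨h, m, r, β, hh, hβ, hβ0, hF⟩ := hF
  refine ⟨fun z => c * h z, m, c • r, β, analyticAt_const.mul hh, hβ, hβ0, ?_⟩
  filter_upwards [hF] with z hFz
  simp only [hFz, weightedInner, Pi.smul_apply, smul_eq_mul, ofReal_mul, map_mul, conj_ofReal]
  rw [mul_add, mul_add, Finset.mul_sum]
  ring_nf

theorem MemUmehara.sum {κ : Type*} (s : Finset κ) {F : κ → (Fin n → ℂ) → ℂ}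
    (hF : ∀ k ∈ s, MemUmehara p (F k)) : MemUmehara p fun z => ∑ k ∈ s, F k z := by
  classical
  induction s using Finset.induction_on with
  | empty => exact memUmehara_zero
  | insert k s hk ih =>
    simp_rw [Finset.sum_insert hk]
    exact (hF k (s.mem_insert_self k)).add (ih fun j hj => hF j (Finset.mem_insert_of_mem hj))

theorem memUmehara_mul_conj_add_conj_mul {P Q : (Fin n → ℂ) → ℂ} (hP : AnalyticAt ℂ P p)
    (hQ : AnalyticAt ℂ Q p) : MemUmehara p fun z => P z * conj (Q z) + conj (P z) * Q z := by
  -- polarization of `P₀ conj Q₀ + conj P₀ Q₀` for `P₀ = P - P p`, `Q₀ = Q - Q p`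
  set P₀ := fun z => P z - P p
  set Q₀ := fun z => Q z - Q p
  have hP₀ : AnalyticAt ℂ P₀ p := hP.sub analyticAt_const
  have hQ₀ : AnalyticAt ℂ Q₀ p := hQ.sub analyticAt_const
  refine ⟨fun z => conj (Q p) * P z + conj (P p) * Q z - conj (P p) * Q p, 3, ![1, -1, -1],
    ![fun z => P₀ z + Q₀ z, P₀, Q₀],
    ((analyticAt_const.mul hP).add (analyticAt_const.mul hQ)).sub analyticAt_const,
    fun k => by fin_cases k <;> simp [hP₀, hQ₀, hP₀.fun_add hQ₀],
    fun k => by fin_cases k <;> simp [P₀, Q₀], .of_forall fun z => ?_⟩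
  simp only [weightedInner, Fin.sum_univ_three, P₀, Q₀, map_sub, map_add, map_mul, conj_conj,
    Matrix.cons_val_zero, Matrix.cons_val_one, Matrix.cons_val, ofReal_one, ofReal_neg, one_mul,
    neg_mul]
  ring

theorem MemUmehara.exists_hermC (hF : MemUmehara p F) :
    ∃ (m' ℓ' : ℕ) (h' : (Fin n → ℂ) → ℂ) (α' : Fin m' → (Fin n → ℂ) → ℂ),
      ℓ' ≤ m' ∧ AnalyticAt ℂ h' p ∧ (∀ j, AnalyticAt ℂ (α' j) p) ∧ (∀ j, α' j p = 0) ∧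
        ∀ᶠ z in 𝓝 p, F z = h' z + conj (h' z) + hermC ℓ' α' z := by
  obtain ⟨h, m, r, β, hh, hβ, hβ0, hF⟩ := hF
  set pos : Fin m → (Fin n → ℂ) → ℂ := fun k z => √(max (r k) 0) * β k z
  set neg : Fin m → (Fin n → ℂ) → ℂ := fun k z => √(max (-r k) 0) * β k z
  have hα : ∀ j, AnalyticAt ℂ (Fin.append pos neg j) p := Fin.addCases
    (fun k => by rw [Fin.append_left]; exact analyticAt_const.fun_mul (hβ k))
    (fun k => by rw [Fin.append_right]; exact analyticAt_const.fun_mul (hβ k))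
  have hα0 : ∀ j, Fin.append pos neg j p = 0 := Fin.addCases
    (fun k => by simp [pos, hβ0]) (fun k => by rw [Fin.append_right]; simp [neg, hβ0])
  refine ⟨m + m, m, h, Fin.append pos neg, le_add_self, hh, hα, hα0, ?_⟩
  filter_upwards [hF] with z hFz
  have hsq (a : ℝ) : ((√(max a 0) : ℂ) * √(max a 0)) = max a 0 := by
    rw [← ofReal_mul, Real.mul_self_sqrt (le_max_right a 0)]
  have hmax (a : ℝ) : ((max a 0 : ℝ) : ℂ) - (max (-a) 0 : ℝ) = a := by
    exact_mod_cast max_zero_sub_max_neg_zero_eq_self a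
  rw [hFz, hermC, Fin.sum_univ_add]
  simp only [Fin.val_castAdd, Fin.val_natAdd, Fin.is_lt, if_true, Fin.append_left,
    Fin.append_right, add_lt_iff_neg_left, not_lt_zero, if_false, pos, neg, weightedInner,
    map_mul, conj_ofReal, one_mul, neg_one_mul,
    ← Finset.sum_add_distrib]
  congr 1
  refine Finset.sum_congr rfl fun k _ => ?_
  linear_combination (β k z * conj (β k z)) *
    (hsq (-r k) - hsq (r k) - hmax (r k))

end Umehara

section GramDeterminant

variable {n : ℕ} {p : Fin n → ℂ} {ι J : Type*} [Fintype ι] [Fintype J] [DecidableEq J]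

theorem analyticAt_det {M : J → J → (Fin n → ℂ) → ℂ} (hM : ∀ a b, AnalyticAt ℂ (M a b) p) :
    AnalyticAt ℂ (fun z => (Matrix.of fun a b => M a b z).det) p := by
  simp only [Matrix.det_apply, Matrix.of_apply, Units.smul_def, zsmul_eq_mul]
  exact Finset.analyticAt_fun_sum _ fun σ _ =>
    analyticAt_const.fun_mul (Finset.analyticAt_fun_prod _ fun a _ => hM _ _)

theorem memUmehara_det_weightedGram (ε : ι → ℝ) {w : ι → J → (Fin n → ℂ) → ℂ}
    (hw : ∀ i a, AnalyticAt ℂ (w i a) p) : MemUmehara p fun z => (weightedGram ε w z).det := by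
  set P : (J → ι) → (Fin n → ℂ) → ℂ := fun σ z => ∏ a, w (σ a) a z
  set Q : (J → ι) → (Fin n → ℂ) → ℂ := fun σ z => (Matrix.of fun a b => w (σ a) b z).det
  have hP (σ : J → ι) : AnalyticAt ℂ (P σ) p := Finset.analyticAt_fun_prod _ fun a _ => hw (σ a) a
  have hQ (σ : J → ι) : AnalyticAt ℂ (Q σ) p := analyticAt_det fun a b => hw (σ a) b
  have hexpand (z : Fin n → ℂ) : (weightedGram ε w z).det =
      ∑ σ : J → ι, ((∏ a, ε (σ a) : ℝ) : ℂ) * (P σ z * conj (Q σ z)) := by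
    simp only [weightedGram, weightedInner, ← mul_assoc]
    rw [Matrix.det_of_sum_mul]
    refine Finset.sum_congr rfl fun σ _ => ?_
    rw [Finset.prod_mul_distrib, RingHom.map_det, ofReal_prod]
    rfl
  have hreal (z : Fin n → ℂ) : conj (weightedGram ε w z).det = (weightedGram ε w z).det := by
    rw [← Complex.star_def, ← Matrix.det_conjTranspose]
    congr 1
    ext a b
    simp [weightedGram, conj_weightedInner]
  refine (MemUmehara.sum Finset.univ fun (σ : J → ι) _ =>
    (memUmehara_mul_conj_add_conj_mul (hP σ) (hQ σ)).const_mul ((∏ a, ε (σ a)) / 2)).congr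
    (.of_forall fun z => ?_)
  calc ∑ σ : J → ι, (((∏ a, ε (σ a)) / 2 : ℝ) : ℂ) *
          (P σ z * conj (Q σ z) + conj (P σ z) * Q σ z)
      = ((weightedGram ε w z).det + conj (weightedGram ε w z).det) / 2 := by
        rw [hexpand, map_sum, ← Finset.sum_add_distrib, Finset.sum_div]
        refine Finset.sum_congr rfl fun σ _ => ?_
        simp only [map_mul, conj_ofReal, conj_conj]
        push_cast
        ring
    _ = (weightedGram ε w z).det := by rw [hreal]; ring

end GramDeterminant

theorem stmt4_general {n N : ℕ} (c : ℝ) (p : Fin n → ℂ) (s : ℕ)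
    (φ : Fin N → (Fin n → ℂ) → ℂ)
    (hφ : ∀ i, AnalyticAt ℂ (φ i) p)
    (f : (Fin n → ℂ) → ℝ)
    (hf : ∀ z, f z = 1 + (c / |c|) *
      ∑ i : Fin N, (if (i : ℕ) < s then (1 : ℝ) else -1) * Complex.normSq (φ i z))
    (hfpos : ∀ᶠ z in 𝓝 p, 0 < f z)
    (D : (Fin n → ℂ) → ℂ)
    (hD : ∀ z, D z = (((2 / c) * Real.log (f z) : ℝ) : ℂ)) :
    ∃ (m' : ℕ) (ℓ' : ℕ) (h' : (Fin n → ℂ) → ℂ) (α' : Fin m' → (Fin n → ℂ) → ℂ),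
      ℓ' ≤ m' ∧ AnalyticAt ℂ h' p ∧ (∀ j, AnalyticAt ℂ (α' j) p) ∧ (∀ j, α' j p = 0) ∧
      ∀ᶠ z in 𝓝 p,
        ((f z : ℂ)) ^ (n + 1) *
            Matrix.det (Matrix.of fun a b : Fin n => wderiv a (wderivBar b D) z) =
          h' z + (starRingEnd ℂ) (h' z) + hermC ℓ' α' z := by
  set ε : Option (Fin N) → ℝ := fun o => o.elim 1 fun i => c / |c| * if (i : ℕ) < s then 1 else -1
  set ψ : Option (Fin N) → (Fin n → ℂ) → ℂ := fun o => o.elim (fun _ => 1) φ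
  have hfψ (z : Fin n → ℂ) : (f z : ℂ) = weightedInner ε ψ ψ z := by
    simp only [hf, weightedInner, Fintype.sum_option, ε, ψ, Option.elim, mul_conj, Finset.mul_sum,
      ofReal_add, ofReal_one, ofReal_sum, ofReal_mul, map_one, mul_one, mul_assoc]
  have hψ : ∀ o, AnalyticAt ℂ (ψ o) p := fun o => o.rec analyticAt_const hφ
  have hnear : ∀ᶠ z in 𝓝 p, ∀ᶠ w in 𝓝 z, (∀ o, AnalyticAt ℂ (ψ o) w) ∧ 0 < f w :=
    eventually_eventually_nhds.2
      ((eventually_all.2 fun o => (hψ o).eventually_analyticAt).and hfpos)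
  have hgram := memUmehara_det_weightedGram ε
    (w := fun o => Sum.elim (fun _ : Unit => ψ o) fun b => partialZ b (ψ o))
    fun o => Sum.rec (fun _ => hψ o) fun b => (hψ o).partialZ b
  refine ((hgram.const_mul ((2 / c) ^ n)).congr ?_).exists_hermC
  filter_upwards [hnear] with z hz
  rw [pow_succ_mul_det_wderiv_wderivBar_log hfψ hD hz]
  push_cast
  rfl

/-- Proposition `mainprop`, case `c ≠ 0`: with `f = 1 + (c/|c|)(Σ_{i<s}|φ_i|² − Σ_{i≥s}|φ_i|²)`
positive near `p` and `D = (2/c) log f`, the function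
`f^{n+1} det[∂²D/∂z_a ∂z̄_b] = e^{(n+1)(c/2)D} det[∂²D/∂z_a ∂z̄_b]` belongs to `Λ_p`. -/
theorem stmt4 {n N : ℕ} (c : ℝ) (hc : c ≠ 0) (p : Fin n → ℂ) (s : ℕ) (hs : s ≤ N)
    (φ : Fin N → (Fin n → ℂ) → ℂ)
    (hφ : ∀ i, AnalyticAt ℂ (φ i) p) (hφ0 : ∀ i, φ i p = 0)
    (f : (Fin n → ℂ) → ℝ)
    (hf : ∀ z, f z = 1 + (c / |c|) *
      ∑ i : Fin N, (if (i : ℕ) < s then (1 : ℝ) else -1) * Complex.normSq (φ i z))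
    (hfpos : ∀ᶠ z in 𝓝 p, 0 < f z)
    (D : (Fin n → ℂ) → ℂ)
    (hD : ∀ z, D z = (((2 / c) * Real.log (f z) : ℝ) : ℂ)) :
    ∃ (m' : ℕ) (ℓ' : ℕ) (h' : (Fin n → ℂ) → ℂ) (α' : Fin m' → (Fin n → ℂ) → ℂ),
      ℓ' ≤ m' ∧ AnalyticAt ℂ h' p ∧ (∀ j, AnalyticAt ℂ (α' j) p) ∧ (∀ j, α' j p = 0) ∧
      ∀ᶠ z in 𝓝 p,
        ((f z : ℂ)) ^ (n + 1) *
            Matrix.det (Matrix.of fun a b : Fin n => wderiv a (wderivBar b D) z) =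
          h' z + (starRingEnd ℂ) (h' z) + hermC ℓ' α' z :=
  stmt4_general c p s φ hφ f hf hfpos D hD
end

section
/- Let U ⊆ ℂ^n be a connected open set and let φ₁,…,φ_l be holomorphic functions on U that are algebraically independent over the field of rational functions: there is no nonzero polynomial P ∈ ℂ[z₁,…,z_n, X₁,…,X_l] with P(z, φ₁(z),…,φ_l(z)) = 0 for all z ∈ U. Let Û be a connected open neighborhood of the graph {(z, φ₁(z),…,φ_l(z)) : z ∈ U} in ℂ^n × ℂ^l and let G be a holomorphic Nash algebraic function on Û. If G(z, φ₁(z),…,φ_l(z)) = 0 for all z ∈ U, then G vanishes identically on Û. -/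
open Filter Topology Complex

/-!
Suppose `G` does not vanish identically and write its polynomial relation as `P = X^m Q` with
`Q(z, X, 0) ≢ 0`. Then `G^m · Q(z, X, G) = 0` on `Û`; since `G` is holomorphic, not identically
zero and `Û` is connected, the identity theorem forces the continuous function `Q(z, X, G)` to
vanish on all of `Û`. Along the graph, where `G = 0`, this says `Q(z, φ(z), 0) = 0`, a nontrivial
algebraic relation between `z` and `φ(z)`.
-/

section IdentityTheorem

variable {E : Type*} [NormedAddCommGroup E] [NormedSpace ℂ E] {f : E → ℂ} {s : Set E}

/-- Reduced to one variable along the complex line through `y` and `w`. -/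
theorem DifferentiableOn.eqOn_zero_of_convex_of_eventuallyEq_zero (hf : DifferentiableOn ℂ f s)
    (hs : IsOpen s) (hconv : Convex ℝ s) {y : E} (hy : y ∈ s) (hfy : f =ᶠ[𝓝 y] 0) :
    Set.EqOn f 0 s := by
  intro w hw
  set line : ℂ → E := fun t => y + t • (w - y)
  have hline : Continuous line := by fun_prop
  set lineSet : Set ℂ := line ⁻¹' s
  have hconv_t : Convex ℝ lineSet :=
    (hconv.translate_preimage_right y).linear_preimage
      ((LinearMap.toSpanSingleton ℂ E (w - y)).restrictScalars ℝ)
  have hana : AnalyticOnNhd ℂ (f ∘ line) lineSet :=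
    (hf.comp (by fun_prop : Differentiable ℂ line).differentiableOn fun _ ht => ht).analyticOnNhd
      (hs.preimage hline)
  have h0 : (f ∘ line) =ᶠ[𝓝 0] 0 := by
    refine hfy.comp_tendsto ?_
    simpa [line] using hline.tendsto 0
  simpa [line] using hana.eqOn_zero_of_preconnected_of_eventuallyEq_zero hconv_t.isPreconnected
    (by simpa [lineSet, line] using hy) h0 (show (1 : ℂ) ∈ lineSet by simpa [lineSet, line] using hw)

theorem DifferentiableOn.eqOn_zero_of_preconnected_of_eventuallyEq_zero
    (hf : DifferentiableOn ℂ f s) (hs : IsOpen s) (hconn : IsPreconnected s) {x₀ : E}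
    (hx₀ : x₀ ∈ s) (hfx₀ : f =ᶠ[𝓝 x₀] 0) : Set.EqOn f 0 s := by
  suffices hsub : s ⊆ {x | f =ᶠ[𝓝 x] 0} from fun x hx => (hsub hx).self_of_nhds
  refine hconn.subset_of_closure_inter_subset isOpen_setOfPred_eventually_nhds ⟨x₀, hx₀, hfx₀⟩ ?_
  rintro x ⟨hx_cl, hx⟩
  obtain ⟨r, hr, hball⟩ := Metric.isOpen_iff.1 hs x hx
  obtain ⟨y, hy_ball, hy⟩ := mem_closure_iff_nhds.1 hx_cl _ (Metric.ball_mem_nhds x hr)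
  have hzero : Set.EqOn f 0 (Metric.ball x r) :=
    (hf.mono hball).eqOn_zero_of_convex_of_eventuallyEq_zero Metric.isOpen_ball
      (convex_ball x r) hy_ball hy
  exact eventually_of_mem (Metric.ball_mem_nhds x hr) hzero

/-- Near a point where `F ≠ 0`, the function `g` would vanish on an open set. -/
theorem eqOn_zero_of_mul_eq_zero {g F : E → ℂ} (hg : DifferentiableOn ℂ g s) (hs : IsOpen s)
    (hconn : IsPreconnected s) {x₀ : E} (hx₀ : x₀ ∈ s) (hgx₀ : g x₀ ≠ 0)
    (hF : ContinuousOn F s) (hgF : ∀ x ∈ s, g x * F x = 0) : Set.EqOn F 0 s := by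
  intro x hx
  by_contra hFx
  have hg_near : g =ᶠ[𝓝 x] 0 := by
    filter_upwards [(hF.continuousAt (hs.mem_nhds hx)).eventually_ne hFx, hs.mem_nhds hx]
      with y hFy hy
    exact (mul_eq_zero.1 (hgF y hy)).resolve_right hFy
  exact hgx₀ (hg.eqOn_zero_of_preconnected_of_eventuallyEq_zero hs hconn hx hg_near hx₀)

end IdentityTheorem

theorem Polynomial.exists_eq_X_pow_mul_coeff_zero_ne_zero {R : Type*} [Ring R]
    {p : Polynomial R} (hp : p ≠ 0) : ∃ m q, p = X ^ m * q ∧ q.coeff 0 ≠ 0 := by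
  obtain ⟨q, hpq, hq⟩ := p.exists_eq_pow_rootMultiplicity_mul_and_not_dvd hp 0
  rw [map_zero, sub_zero] at hpq hq
  exact ⟨_, q, hpq, mt X_dvd_iff.2 hq⟩

theorem ContinuousOn.polynomial_eval₂_mvPolynomial_eval {X σ R : Type*} [TopologicalSpace X]
    [CommSemiring R] [TopologicalSpace R] [IsTopologicalSemiring R] {v : X → σ → R}
    (hv : Continuous v) {g : X → R} {s : Set X} (hg : ContinuousOn g s)
    (Q : Polynomial (MvPolynomial σ R)) :
    ContinuousOn (fun x => Q.eval₂ (MvPolynomial.eval (v x)) (g x)) s := by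
  simp only [Polynomial.eval₂_eq_sum_range]
  exact continuousOn_finsetSum _ fun i _ =>
    (((Q.coeff i).continuous_eval.comp hv).continuousOn).mul (hg.pow i)

theorem continuous_sumElim_prod {α ι κ : Type*} [TopologicalSpace α] :
    Continuous fun x : (ι → α) × (κ → α) => Sum.elim x.1 x.2 :=
  continuous_pi fun | .inl i => (continuous_apply i).comp continuous_fst
                    | .inr i => (continuous_apply i).comp continuous_snd

/-- A holomorphic function `G` on `Û ⊆ ℂ^n × ℂ^l` is Nash algebraic if it satisfies a
nontrivial polynomial equation `P(z, X, G(z,X)) = 0` on `Û`. -/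
def NashAlgebraicOn2 {n l : ℕ} (G : (Fin n → ℂ) × (Fin l → ℂ) → ℂ)
    (Uhat : Set ((Fin n → ℂ) × (Fin l → ℂ))) : Prop :=
  DifferentiableOn ℂ G Uhat ∧
    ∃ P : Polynomial (MvPolynomial (Fin n ⊕ Fin l) ℂ), P ≠ 0 ∧
      ∀ zX ∈ Uhat,
        Polynomial.eval₂ (MvPolynomial.eval (Sum.elim zX.1 zX.2)) (G zX) P = 0

theorem stmt11_general {n l : ℕ} (U : Set (Fin n → ℂ))
    (φ : Fin l → (Fin n → ℂ) → ℂ)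
    (hindep : ¬ ∃ P : MvPolynomial (Fin n ⊕ Fin l) ℂ, P ≠ 0 ∧
      ∀ z ∈ U, MvPolynomial.eval (Sum.elim z (fun i => φ i z)) P = 0)
    (Uhat : Set ((Fin n → ℂ) × (Fin l → ℂ)))
    (hUhatOpen : IsOpen Uhat) (hUhatConn : IsConnected Uhat)
    (hgraph : ∀ z ∈ U, (z, fun i => φ i z) ∈ Uhat)
    (G : (Fin n → ℂ) × (Fin l → ℂ) → ℂ) (hG : NashAlgebraicOn2 G Uhat)
    (hvanish : ∀ z ∈ U, G (z, fun i => φ i z) = 0) :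
    ∀ zX ∈ Uhat, G zX = 0 := by
  obtain ⟨hG_diff, P, hP, hPG⟩ := hG
  by_contra! ⟨x₀, hx₀, hGx₀⟩
  obtain ⟨m, Q, rfl, hQ⟩ := Polynomial.exists_eq_X_pow_mul_coeff_zero_ne_zero hP
  have hQG : ∀ x ∈ Uhat, Q.eval₂ (MvPolynomial.eval (Sum.elim x.1 x.2)) (G x) = 0 :=
    eqOn_zero_of_mul_eq_zero (hG_diff.pow m) hUhatOpen hUhatConn.isPreconnected hx₀
      (pow_ne_zero m hGx₀)
      (hG_diff.continuousOn.polynomial_eval₂_mvPolynomial_eval continuous_sumElim_prod Q)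
      fun x hx => by simpa [Polynomial.eval₂_mul, Polynomial.eval₂_X_pow] using hPG x hx
  refine hindep ⟨Q.coeff 0, hQ, fun z hz => ?_⟩
  simpa [hvanish z hz, Polynomial.eval₂_at_zero] using hQG _ (hgraph z hz)

/-- A Nash algebraic function vanishing along the graph of holomorphic functions which
are algebraically independent over the rational functions vanishes identically. -/
theorem stmt11 {n l : ℕ} (U : Set (Fin n → ℂ)) (hUopen : IsOpen U) (hUconn : IsConnected U)
    (φ : Fin l → (Fin n → ℂ) → ℂ) (hφ : ∀ i, DifferentiableOn ℂ (φ i) U)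
    (hindep : ¬ ∃ P : MvPolynomial (Fin n ⊕ Fin l) ℂ, P ≠ 0 ∧
      ∀ z ∈ U, MvPolynomial.eval (Sum.elim z (fun i => φ i z)) P = 0)
    (Uhat : Set ((Fin n → ℂ) × (Fin l → ℂ)))
    (hUhatOpen : IsOpen Uhat) (hUhatConn : IsConnected Uhat)
    (hgraph : ∀ z ∈ U, (z, fun i => φ i z) ∈ Uhat)
    (G : (Fin n → ℂ) × (Fin l → ℂ) → ℂ) (hG : NashAlgebraicOn2 G Uhat)
    (hvanish : ∀ z ∈ U, G (z, fun i => φ i z) = 0) :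
    ∀ zX ∈ Uhat, G zX = 0 :=
  stmt11_general U φ hindep Uhat hUhatOpen hUhatConn hgraph G hG hvanish
end
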